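/- arXiv:1311.7089 — 4 statements merged into one kernel-verified Lean document; each statement's English description precedes it below -/
import Mathlib

section
/- Let W(A_n) be the Coxeter group of type A_n with generators σ_1,…,σ_n. Every fully commutative element u of W(A_n) has a unique reduced expression of the form u = (σ_{i_1}σ_{i_1−1}⋯σ_{j_1})(σ_{i_2}σ_{i_2−1}⋯σ_{j_2})⋯(σ_{i_p}σ_{i_p−1}⋯σ_{j_p}) with 1 ≤ i_1 < i_2 < ⋯ < i_p ≤ n, 1 ≤ j_1 < j_2 < ⋯ < j_p ≤ n, and j_k ≤ i_k for all 1 ≤ k ≤ p. -/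
open CoxeterSystem
open Fin.NatCast

def CommMove {B : Type*} (M : CoxeterMatrix B) (ω₁ ω₂ : List B) : Prop :=
  ∃ (l r : List B) (s t : B), M s t = 2 ∧ ω₁ = l ++ s :: t :: r ∧ ω₂ = l ++ t :: s :: r

def CommEquiv {B : Type*} (M : CoxeterMatrix B) : List B → List B → Prop :=
  Relation.ReflTransGen (CommMove M)

def IsRedexOf {B W : Type*} [Group W] {M : CoxeterMatrix B} (cs : CoxeterSystem M W)
    (ω : List B) (w : W) : Prop :=
  cs.wordProd ω = w ∧ cs.IsReduced ω

def IsFC {B W : Type*} [Group W] {M : CoxeterMatrix B} (cs : CoxeterSystem M W) (w : W) : Prop :=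
  ∀ ω₁ ω₂, IsRedexOf cs ω₁ w → IsRedexOf cs ω₂ w → CommEquiv M ω₁ ω₂

/-- The decreasing word `[i, i-1, ..., j]` of (1-based) generator subscripts. -/
def decW (i j : ℕ) : List ℕ := (List.range' j (i + 1 - j)).reverse

/-!
Existence. Append the letters of a reduced word of `u` one at a time to the empty word, keeping
it a product of decreasing blocks `σ_i ⋯ σ_j` with increasing tops `i`: a new letter `σ_m`
commutes past a block with `m + 2 ≤ j`, and `σ_i ⋯ σ_j σ_m = σ_{m-1} σ_i ⋯ σ_j` for `j < m ≤ i`.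
The word never grows by more than one letter per step, so the result is again reduced. Full
commutativity forces the bottoms `j` to increase as well: if `j' ≤ j` for consecutive blocks,
commutations expose a factor `σ_j σ_{j+1} σ_j`, and the braid relation turns it into a reduced
word with a different number of letters `σ_j`, which no commutation moves can reach.

Uniqueness. Two such words are related by commutation moves, so for every `t` their subwords on
the letters `t, t + 1` agree; these subwords determine the blocks one at a time from the end.
-/

open List

theorem map_getD_range {α : Type*} (l : List α) (d : α) :
    (range l.length).map (l.getD · d) = l :=
  ext_getElem (by simp) fun k _ hk => by simp [getElem?_eq_getElem hk]

section CommEquiv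

variable {B : Type*} {M : CoxeterMatrix B}

theorem CommMove.perm {ω₁ ω₂ : List B} (h : CommMove M ω₁ ω₂) : ω₁.Perm ω₂ := by
  obtain ⟨l, r, s, t, -, rfl, rfl⟩ := h
  exact (Perm.swap t s r).append_left l

theorem CommEquiv.perm {ω₁ ω₂ : List B} (h : CommEquiv M ω₁ ω₂) : ω₁.Perm ω₂ :=
  Relation.ReflTransGen.rec (Perm.refl _) (fun _ hm hp => hp.trans hm.perm) h

theorem CommMove.filter_eq {ω₁ ω₂ : List B} (h : CommMove M ω₁ ω₂) {p : B → Bool}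
    (hp : ∀ s t, p s → p t → M s t ≠ 2) : ω₁.filter p = ω₂.filter p := by
  obtain ⟨l, r, s, t, hst, rfl, rfl⟩ := h
  cases hs : p s <;> cases ht : p t
  case true.true => exact absurd hst (hp s t hs ht)
  all_goals simp [hs, ht]

theorem CommEquiv.filter_eq {ω₁ ω₂ : List B} (h : CommEquiv M ω₁ ω₂) {p : B → Bool}
    (hp : ∀ s t, p s → p t → M s t ≠ 2) : ω₁.filter p = ω₂.filter p :=
  Relation.ReflTransGen.rec rfl (fun _ hm he => he.trans (hm.filter_eq hp)) h

theorem commEquiv_append_cons_append (l mid r : List B) {s : B} (h : ∀ x ∈ mid, M s x = 2) :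
    CommEquiv M (l ++ s :: (mid ++ r)) (l ++ mid ++ s :: r) := by
  induction mid generalizing l with
  | nil =>
    simp only [nil_append, append_nil]
    exact Relation.ReflTransGen.refl
  | cons x mid ih =>
    refine Relation.ReflTransGen.head ⟨l, mid ++ r, s, x, h x mem_cons_self, rfl, rfl⟩ ?_
    have := ih (l ++ [x]) fun y hy => h y (mem_cons_of_mem x hy)
    simp only [append_assoc, cons_append, nil_append] at this ⊢
    exact this

variable {W : Type*} [Group W] (cs : CoxeterSystem M W)

local prefix:100 "σ" => cs.simple
local prefix:100 "π" => cs.wordProd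

theorem CommMove.wordProd_eq {ω₁ ω₂ : List B} (h : CommMove M ω₁ ω₂) : π ω₁ = π ω₂ := by
  obtain ⟨l, r, s, t, hst, rfl, rfl⟩ := h
  have hcomm : σ s * σ t = σ t * σ s := by
    simpa [braidWord, alternatingWord, hst, M.symmetric t s, wordProd_cons]
      using cs.wordProd_braidWord_eq s t
  simp only [wordProd_append, wordProd_cons]
  rw [← mul_assoc (σ s), hcomm, mul_assoc]

theorem CommEquiv.wordProd_eq {ω₁ ω₂ : List B} (h : CommEquiv M ω₁ ω₂) : π ω₁ = π ω₂ :=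
  Relation.ReflTransGen.rec rfl (fun _ hm he => he.trans (hm.wordProd_eq cs)) h

theorem simple_braid {s t : B} (h : M s t = 3) : σ s * σ t * σ s = σ t * σ s * σ t := by
  simpa [braidWord, alternatingWord, h, M.symmetric t s, wordProd_cons, mul_assoc]
    using (cs.wordProd_braidWord_eq s t).symm

theorem IsFC.false_of_commEquiv_braid {u : W} (hu : IsFC cs u) {ω P S : List B} {s t : B}
    (hst : M s t = 3) (hω : IsRedexOf cs ω u) (h : CommEquiv M ω (P ++ s :: t :: s :: S)) :
    False := by
  classical
  have hprod : π (P ++ t :: s :: t :: S) = u := by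
    rw [← hω.1, h.wordProd_eq cs]
    simp only [wordProd_append, wordProd_cons, ← mul_assoc, simple_braid cs hst]
  have hlen : (P ++ t :: s :: t :: S).length = ω.length := by simp [h.perm.length_eq]
  have hred : IsRedexOf cs (P ++ t :: s :: t :: S) u :=
    ⟨hprod, by rw [CoxeterSystem.IsReduced, hprod, hlen, ← hω.1]; exact hω.2⟩
  have hcount := (h.perm.symm.trans (hu _ _ hω hred).perm).count_eq s
  have hne : t ≠ s := by
    rintro rfl
    simp at hst
  simp [hne] at hcount

end CommEquiv

section TypeA

theorem A_eq_two_iff {n : ℕ} {a b : Fin n} :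
    CoxeterMatrix.A n a b = 2 ↔ (a : ℕ) + 2 ≤ b ∨ (b : ℕ) + 2 ≤ a := by
  simp only [CoxeterMatrix.A, Matrix.of_apply, Fin.ext_iff]
  split_ifs <;> omega

theorem A_eq_three_of_succ {n : ℕ} {a b : Fin n} (h : (a : ℕ) + 1 = b) :
    CoxeterMatrix.A n a b = 3 := by
  simp only [CoxeterMatrix.A, Matrix.of_apply, Fin.ext_iff]
  split_ifs <;> omega

def letter (n : ℕ) [NeZero n] (k : ℕ) : Fin n := ((k - 1 : ℕ) : Fin n)

variable {n : ℕ} [NeZero n]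

theorem val_letter {k : ℕ} (h1 : 1 ≤ k) (h2 : k ≤ n) : (letter n k : ℕ) = k - 1 :=
  Fin.val_cast_of_lt (by omega)

theorem letter_val_add_one (a : Fin n) : letter n ((a : ℕ) + 1) = a := by
  simp [letter]

theorem map_val_succ_map_letter {ω : List ℕ} (h : ∀ x ∈ ω, 1 ≤ x ∧ x ≤ n) :
    (ω.map (letter n)).map (fun a : Fin n => (a : ℕ) + 1) = ω := by
  rw [map_map]
  conv_rhs => rw [← map_id ω]
  refine map_congr_left fun x hx => ?_
  obtain ⟨h1, h2⟩ := h x hx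
  simp only [Function.comp_apply, val_letter h1 h2, id]
  omega

theorem A_letter_eq_two {x y : ℕ} (hx : 1 ≤ x ∧ x ≤ n) (hy : 1 ≤ y ∧ y ≤ n)
    (h : x + 2 ≤ y ∨ y + 2 ≤ x) : CoxeterMatrix.A n (letter n x) (letter n y) = 2 := by
  rw [A_eq_two_iff, val_letter hx.1 hx.2, val_letter hy.1 hy.2]
  omega

theorem A_letter_succ {x : ℕ} (hx : 1 ≤ x) (hxn : x + 1 ≤ n) :
    CoxeterMatrix.A n (letter n x) (letter n (x + 1)) = 3 := by
  refine A_eq_three_of_succ ?_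
  rw [val_letter hx (by omega), val_letter (by omega) hxn]
  omega

end TypeA

section DecreasingWords

theorem mem_decW {x i j : ℕ} : x ∈ decW i j ↔ j ≤ x ∧ x ≤ i := by
  simp only [decW, mem_reverse, mem_range'_1]
  omega

theorem length_decW (i j : ℕ) : (decW i j).length = i + 1 - j := by simp [decW]

theorem decW_self (i : ℕ) : decW i i = [i] := by simp [decW]

theorem pairwise_gt_decW (i j : ℕ) : (decW i j).Pairwise (· > ·) :=
  pairwise_reverse.mpr (pairwise_lt_range' _ Nat.one_pos)

theorem eq_decW_of_pairwise {l : List ℕ} {i j : ℕ} (hl : l.Pairwise (· > ·))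
    (hmem : ∀ x, x ∈ l ↔ j ≤ x ∧ x ≤ i) : l = decW i j :=
  hl.eq_of_mem_iff (pairwise_gt_decW i j) fun x => by rw [hmem, mem_decW]

theorem decW_append {i j m : ℕ} (h1 : j ≤ m + 1) (h2 : m ≤ i) :
    decW i (m + 1) ++ decW m j = decW i j :=
  eq_decW_of_pairwise
    (pairwise_append.mpr ⟨pairwise_gt_decW _ _, pairwise_gt_decW _ _,
      fun a ha b hb => by rw [mem_decW] at ha hb; omega⟩)
    (fun x => by simp only [mem_append, mem_decW]; omega)

theorem decW_eq_append_singleton {i m : ℕ} (h : m ≤ i) : decW i m = decW i (m + 1) ++ [m] := by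
  rw [← decW_self m, decW_append (Nat.le_succ m) h]

theorem decW_eq_append_cons_cons {i j m : ℕ} (hj : 1 ≤ j) (hjm : j ≤ m) (hmi : m + 1 ≤ i) :
    decW i j = decW i (m + 2) ++ (m + 1) :: m :: decW (m - 1) j := by
  refine (eq_decW_of_pairwise ?_ fun x => ?_).symm
  · simp only [pairwise_append, pairwise_cons, pairwise_gt_decW, mem_cons, mem_decW, true_and,
      and_true]
    exact ⟨⟨fun a ha => by omega, fun a ha => by omega⟩, fun a ha b hb => by omega⟩
  · simp only [mem_append, mem_cons, mem_decW]
    omega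

theorem getLast?_decW {i j : ℕ} (h : j ≤ i) : (decW i j).getLast? = some j := by
  simp [decW_eq_append_singleton h]

end DecreasingWords

section Products

variable {n : ℕ} [NeZero n]

theorem commEquiv_map_letter (l mid r : List ℕ) {m : ℕ} (hm : 1 ≤ m ∧ m ≤ n)
    (h : ∀ x ∈ mid, (1 ≤ x ∧ x ≤ n) ∧ (m + 2 ≤ x ∨ x + 2 ≤ m)) :
    CommEquiv (CoxeterMatrix.A n) ((l ++ m :: (mid ++ r)).map (letter n))
      ((l ++ mid ++ m :: r).map (letter n)) := by
  have := commEquiv_append_cons_append (l.map (letter n)) (mid.map (letter n)) (r.map (letter n))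
    (s := letter n m) (M := CoxeterMatrix.A n) fun y hy => by
      obtain ⟨x, hx, rfl⟩ := mem_map.mp hy
      exact A_letter_eq_two hm (h x hx).1 (h x hx).2
  simp only [map_append, map_cons, append_assoc] at this ⊢
  exact this

variable {W : Type*} [Group W] (cs : CoxeterSystem (CoxeterMatrix.A n) W)

local prefix:100 "σ" => cs.simple
local prefix:100 "π" => cs.wordProd

theorem simple_letter_mul_comm {m : ℕ} {ω : List ℕ} (hm : 1 ≤ m ∧ m ≤ n)
    (h : ∀ x ∈ ω, (1 ≤ x ∧ x ≤ n) ∧ (m + 2 ≤ x ∨ x + 2 ≤ m)) :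
    σ (letter n m) * π (ω.map (letter n)) = π (ω.map (letter n)) * σ (letter n m) := by
  simpa [wordProd_cons, wordProd_append] using
    (commEquiv_map_letter [] ω [] hm h).wordProd_eq cs

theorem wordProd_decW_mul_simple {i j m : ℕ} (hj : 1 ≤ j) (hjm : j < m) (hmi : m ≤ i)
    (hi : i ≤ n) :
    π ((decW i j).map (letter n)) * σ (letter n m)
      = σ (letter n (m - 1)) * π ((decW i j).map (letter n)) := by
  obtain ⟨k, rfl⟩ : ∃ k, m = k + 1 := ⟨m - 1, by omega⟩
  rw [decW_eq_append_cons_cons hj (by omega) hmi, Nat.add_sub_cancel]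
  simp only [map_append, map_cons, wordProd_append, wordProd_cons]
  set x := π ((decW i (k + 2)).map (letter n))
  set y := π ((decW (k - 1) j).map (letter n))
  set a := σ (letter n k)
  set b := σ (letter n (k + 1))
  have hx : a * x = x * a := simple_letter_mul_comm cs ⟨by omega, by omega⟩ fun z hz => by
    rw [mem_decW] at hz; omega
  have hy : b * y = y * b := simple_letter_mul_comm cs ⟨by omega, by omega⟩ fun z hz => by
    rw [mem_decW] at hz; omega
  have hab : a * b * a = b * a * b := simple_braid cs (A_letter_succ (by omega) (by omega))
  calc x * (b * (a * y)) * b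
      = x * (b * a * b) * y := by simp only [mul_assoc, ← hy]
    _ = a * x * (b * a * y) := by simp only [← hab, hx, mul_assoc]
    _ = a * (x * (b * (a * y))) := by simp only [mul_assoc]

end Products

section Staircase

/-- Blocks `(i, j)` standing for `decW i j`, listed from the last block of the word to the first,
with `1 ≤ j ≤ i ≤ n` and tops strictly decreasing from below `c`. -/
def IsStaircase (n c : ℕ) (L : List (ℕ × ℕ)) : Prop :=
  (∀ b ∈ L, 1 ≤ b.2 ∧ b.2 ≤ b.1 ∧ b.1 ≤ n ∧ b.1 < c) ∧ L.Pairwise fun x y => y.1 < x.1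

def word (L : List (ℕ × ℕ)) : List ℕ := L.reverse.flatMap fun b => decW b.1 b.2

@[simp] theorem word_nil : word [] = [] := rfl

@[simp] theorem word_cons (i j : ℕ) (L : List (ℕ × ℕ)) :
    word ((i, j) :: L) = word L ++ decW i j := by
  simp [word]

theorem word_append (L L' : List (ℕ × ℕ)) : word (L ++ L') = word L' ++ word L := by
  simp [word]

variable {n : ℕ}

theorem isStaircase_nil (c : ℕ) : IsStaircase n c [] := by simp [IsStaircase]

theorem isStaircase_cons {c i j : ℕ} {L : List (ℕ × ℕ)} :
    IsStaircase n c ((i, j) :: L) ↔ 1 ≤ j ∧ j ≤ i ∧ i ≤ n ∧ i < c ∧ IsStaircase n i L := by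
  simp only [IsStaircase, mem_cons, forall_eq_or_imp, pairwise_cons]
  constructor
  · rintro ⟨⟨hb, htail⟩, htop, hpw⟩
    exact ⟨hb.1, hb.2.1, hb.2.2.1, hb.2.2.2, fun b hb' => ⟨(htail b hb').1, (htail b hb').2.1,
      (htail b hb').2.2.1, htop b hb'⟩, hpw⟩
  · rintro ⟨h1, h2, h3, h4, htail, hpw⟩
    exact ⟨⟨⟨h1, h2, h3, h4⟩, fun b hb => ⟨(htail b hb).1, (htail b hb).2.1, (htail b hb).2.2.1,
      by have := (htail b hb).2.2.2; omega⟩⟩, fun b hb => (htail b hb).2.2.2, hpw⟩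

theorem IsStaircase.mono {c c' : ℕ} {L : List (ℕ × ℕ)} (h : c ≤ c') (hL : IsStaircase n c L) :
    IsStaircase n c' L :=
  ⟨fun b hb => ⟨(hL.1 b hb).1, (hL.1 b hb).2.1, (hL.1 b hb).2.2.1, by
    have := (hL.1 b hb).2.2.2; omega⟩, hL.2⟩

theorem IsStaircase.mem_word {c x : ℕ} {L : List (ℕ × ℕ)} (hL : IsStaircase n c L)
    (hx : x ∈ word L) : 1 ≤ x ∧ x ≤ n ∧ x < c := by
  obtain ⟨b, hb, hxb⟩ := mem_flatMap.mp hx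
  rw [mem_reverse] at hb
  rw [mem_decW] at hxb
  have := hL.1 b hb
  omega

/-- Appending `σ_m` to `word L`: the letter starts a new block, commutes past the last block,
extends it at the bottom, cancels against its bottom letter, or passes through it as `σ_{m-1}`
by a braid relation. -/
def insertLetter : List (ℕ × ℕ) → ℕ → List (ℕ × ℕ)
  | [], m => [(m, m)]
  | (i, j) :: L, m =>
    if i < m then (m, m) :: (i, j) :: L
    else if m + 2 ≤ j then (i, j) :: insertLetter L m
    else if m + 1 = j then (i, m) :: L
    else if m = j then (if j = i then L else (i, j + 1) :: L)
    else (i, j) :: insertLetter L (m - 1)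

theorem IsStaircase.insertLetter {c m : ℕ} {L : List (ℕ × ℕ)} (hL : IsStaircase n c L)
    (hm : 1 ≤ m ∧ m ≤ n) (hmc : m < c) : IsStaircase n c (insertLetter L m) := by
  induction L generalizing c m with
  | nil => exact isStaircase_cons.mpr ⟨hm.1, le_rfl, hm.2, hmc, isStaircase_nil m⟩
  | cons b L ih =>
    obtain ⟨i, j⟩ := b
    obtain ⟨hj, hji, hin, hic, hL⟩ := isStaircase_cons.mp hL
    simp only [_root_.insertLetter]
    split_ifs with h1 h2 h3 h4 h5
    · exact isStaircase_cons.mpr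
        ⟨hm.1, le_rfl, hm.2, hmc, isStaircase_cons.mpr ⟨hj, hji, hin, h1, hL⟩⟩
    · exact isStaircase_cons.mpr ⟨hj, hji, hin, hic, ih hL hm (by omega)⟩
    · exact isStaircase_cons.mpr ⟨hm.1, by omega, hin, hic, hL⟩
    · exact hL.mono (by omega)
    · exact isStaircase_cons.mpr ⟨by omega, by omega, hin, hic, hL⟩
    · exact isStaircase_cons.mpr ⟨hj, hji, hin, hic, ih hL ⟨by omega, by omega⟩ (by omega)⟩

theorem length_word_insertLetter_le (L : List (ℕ × ℕ)) (m : ℕ) :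
    (word (insertLetter L m)).length ≤ (word L).length + 1 := by
  induction L generalizing m with
  | nil => simp [insertLetter, decW_self]
  | cons b L ih =>
    obtain ⟨i, j⟩ := b
    have := ih m
    have := ih (m - 1)
    simp only [insertLetter]
    split_ifs <;> simp [length_decW] <;> omega

def staircase (ω : List ℕ) : List (ℕ × ℕ) := ω.foldl insertLetter []

theorem isStaircase_staircase {ω : List ℕ} (hω : ∀ x ∈ ω, 1 ≤ x ∧ x ≤ n) :
    IsStaircase n (n + 1) (staircase ω) := by
  induction ω using reverseRecOn with
  | nil => exact isStaircase_nil _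
  | append_singleton ω m ih =>
    rw [staircase, foldl_concat]
    exact (ih fun x hx => hω x (by simp [hx])).insertLetter (hω m (by simp)) (by
      have := hω m (by simp); omega)

theorem length_word_staircase_le (ω : List ℕ) : (word (staircase ω)).length ≤ ω.length := by
  induction ω using reverseRecOn with
  | nil => rfl
  | append_singleton ω m ih =>
    rw [staircase, foldl_concat, ← staircase, length_append, length_singleton]
    exact (length_word_insertLetter_le _ m).trans (by omega)

end Staircase

section Existence

variable {n : ℕ} [NeZero n] {W : Type*} [Group W] (cs : CoxeterSystem (CoxeterMatrix.A n) W)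

local prefix:100 "σ" => cs.simple
local prefix:100 "π" => cs.wordProd

theorem wordProd_word_insertLetter {c m : ℕ} {L : List (ℕ × ℕ)} (hL : IsStaircase n c L)
    (hm : 1 ≤ m ∧ m ≤ n) :
    π ((word (insertLetter L m)).map (letter n))
      = π ((word L).map (letter n)) * σ (letter n m) := by
  induction L generalizing c m with
  | nil => simp [insertLetter, decW_self]
  | cons b L ih =>
    obtain ⟨i, j⟩ := b
    obtain ⟨hj, hji, hin, -, hL⟩ := isStaircase_cons.mp hL
    simp only [insertLetter]
    split_ifs with h1 h2 h3 h4 h5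
    · simp [decW_self, wordProd_append, mul_assoc]
    · have hcomm := simple_letter_mul_comm cs hm (ω := decW i j) fun x hx => by
        rw [mem_decW] at hx; omega
      simp only [word_cons, map_append, wordProd_append, ih hL hm, mul_assoc, hcomm]
    · subst h3
      simp [decW_eq_append_singleton (show m ≤ i by omega), wordProd_append, mul_assoc]
    · subst h4 h5
      simp [decW_self, wordProd_append]
    · subst h4
      simp [decW_eq_append_singleton hji, wordProd_append, mul_assoc]
    · simp only [word_cons, map_append, wordProd_append, ih (m := m - 1) hL ⟨by omega, by omega⟩,
        mul_assoc, wordProd_decW_mul_simple cs hj (by omega : j < m) (by omega) hin]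

theorem wordProd_word_staircase {ω : List ℕ} (hω : ∀ x ∈ ω, 1 ≤ x ∧ x ≤ n) :
    π ((word (staircase ω)).map (letter n)) = π (ω.map (letter n)) := by
  induction ω using reverseRecOn with
  | nil => rfl
  | append_singleton ω m ih =>
    have hω' : ∀ x ∈ ω, 1 ≤ x ∧ x ≤ n := fun x hx => hω x (by simp [hx])
    rw [staircase, foldl_concat, ← staircase,
      wordProd_word_insertLetter cs (isStaircase_staircase hω') (hω m (by simp)), ih hω']
    simp [wordProd_append]

theorem exists_staircase_isRedexOf (u : W) :
    ∃ L, IsStaircase n (n + 1) L ∧ IsRedexOf cs ((word L).map (letter n)) u := by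
  obtain ⟨ωF, hred, rfl⟩ := cs.exists_isReduced u
  set ω := ωF.map fun a : Fin n => (a : ℕ) + 1
  have hω : ∀ x ∈ ω, 1 ≤ x ∧ x ≤ n := by
    simp only [ω, mem_map]
    rintro x ⟨a, -, rfl⟩
    omega
  have hωF : ω.map (letter n) = ωF := by simp [ω, Function.comp_def, letter_val_add_one]
  have hprod := wordProd_word_staircase cs hω
  rw [hωF] at hprod
  refine ⟨staircase ω, isStaircase_staircase hω, hprod, le_antisymm (cs.length_wordProd_le _) ?_⟩
  rw [hprod, hred, length_map]
  simpa [ω] using length_word_staircase_le ω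

end Existence

theorem IsStaircase.pairwise_snd_of_isFC {n : ℕ} [NeZero n] {W : Type*} [Group W]
    {cs : CoxeterSystem (CoxeterMatrix.A n) W} {u : W} {c : ℕ} {L : List (ℕ × ℕ)}
    (hL : IsStaircase n c L) (hu : IsFC cs u) (hLu : IsRedexOf cs ((word L).map (letter n)) u) :
    L.Pairwise fun x y => y.2 < x.2 := by
  have : IsTrans (ℕ × ℕ) fun x y => y.2 < x.2 := ⟨fun _ _ _ h₁ h₂ => h₂.trans h₁⟩
  refine isChain_iff_pairwise.mp (isChain_iff_forall_rel_of_append_cons_cons.mpr ?_)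
  rintro ⟨i', j'⟩ ⟨i, j⟩ l₁ l₂ rfl
  by_contra! hjj
  obtain ⟨hj', -, hi'n, -⟩ := hL.1 (i', j') (by simp)
  obtain ⟨hj, hji, -, -⟩ := hL.1 (i, j) (by simp)
  have hii : i < i' := (pairwise_cons.mp (pairwise_append.mp hL.2).2.1).1 (i, j) (by simp)
  rw [word_append, word_cons, word_cons, decW_eq_append_singleton hji,
    decW_eq_append_cons_cons hj' hjj (by omega)] at hLu
  refine hu.false_of_commEquiv_braid cs (A_letter_succ hj (by omega)) hLu
    (P := (word l₂ ++ decW i (j + 1) ++ decW i' (j + 2)).map (letter n))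
    (S := (decW (j - 1) j' ++ word l₁).map (letter n)) ?_
  have := commEquiv_map_letter (n := n) (word l₂ ++ decW i (j + 1)) (decW i' (j + 2))
    ((j + 1) :: j :: (decW (j - 1) j' ++ word l₁)) ⟨hj, by omega⟩ fun x hx => by
      rw [mem_decW] at hx; omega
  simpa using this

section Uniqueness

def pairFilter (t : ℕ) (ω : List ℕ) : List ℕ := ω.filter fun x => t ≤ x ∧ x ≤ t + 1

theorem pairFilter_decW (t i j : ℕ) : pairFilter t (decW i j) = decW (min i (t + 1)) (max j t) :=
  ((pairwise_gt_decW i j).filter _).eq_of_mem_iff (pairwise_gt_decW _ _) fun x => by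
    simp only [mem_filter, mem_decW, decide_eq_true_eq]
    omega

theorem pairFilter_append (t : ℕ) (ω ω' : List ℕ) :
    pairFilter t (ω ++ ω') = pairFilter t ω ++ pairFilter t ω' :=
  filter_append _ _

theorem mem_iff_of_pairFilter_eq {ω ω' : List ℕ} (h : ∀ t, pairFilter t ω = pairFilter t ω')
    (x : ℕ) : x ∈ ω ↔ x ∈ ω' := by
  have hmem : ∀ v : List ℕ, x ∈ v ↔ x ∈ pairFilter x v := by simp [pairFilter]
  rw [hmem ω, h x, ← hmem ω']

theorem pairFilter_word_cons_ne {i j j' : ℕ} (hjj : j < j') (hj'i : j' ≤ i)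
    (L L' : List (ℕ × ℕ)) :
    pairFilter (j' - 1) (word ((i, j) :: L)) ≠ pairFilter (j' - 1) (word ((i, j') :: L')) := by
  intro h
  have := congrArg getLast? h
  simp only [word_cons, pairFilter_append, pairFilter_decW, getLast?_append] at this
  rw [getLast?_decW (by omega), getLast?_decW (by omega)] at this
  simp at this
  omega

variable {n : ℕ}

theorem IsStaircase.le_of_mem_word_cons {c i j x : ℕ} {L : List (ℕ × ℕ)}
    (hL : IsStaircase n c ((i, j) :: L)) (hx : x ∈ word ((i, j) :: L)) : x ≤ i := by
  obtain ⟨-, -, -, -, hL⟩ := isStaircase_cons.mp hL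
  rw [word_cons, mem_append, mem_decW] at hx
  rcases hx with hx | hx
  · exact (hL.mem_word hx).2.2.le
  · exact hx.2

theorem IsStaircase.top_mem_word_cons {c i j : ℕ} {L : List (ℕ × ℕ)}
    (hL : IsStaircase n c ((i, j) :: L)) : i ∈ word ((i, j) :: L) := by
  obtain ⟨-, hji, -⟩ := isStaircase_cons.mp hL
  simp [mem_decW, hji]

/-- The top `i` of the last block is the largest letter, and for `t < i` its bottom `j` makes
`pairFilter t` end in `t` if `j ≤ t` and in `t + 1` if `j = t + 1`. -/
theorem IsStaircase.eq_of_pairFilter_eq {c c' : ℕ} {L L' : List (ℕ × ℕ)}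
    (hL : IsStaircase n c L) (hL' : IsStaircase n c' L')
    (h : ∀ t, pairFilter t (word L) = pairFilter t (word L')) : L = L' := by
  induction L generalizing c c' L' with
  | nil =>
    obtain _ | ⟨⟨i', j'⟩, L'⟩ := L'
    · rfl
    · simpa using (mem_iff_of_pairFilter_eq h i').mpr hL'.top_mem_word_cons
  | cons b L ih =>
    obtain ⟨i, j⟩ := b
    obtain _ | ⟨⟨i', j'⟩, L'⟩ := L'
    · simpa using (mem_iff_of_pairFilter_eq h i).mp hL.top_mem_word_cons
    have hii : i = i' := le_antisymm
      (hL'.le_of_mem_word_cons ((mem_iff_of_pairFilter_eq h i).mp hL.top_mem_word_cons))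
      (hL.le_of_mem_word_cons ((mem_iff_of_pairFilter_eq h i').mpr hL'.top_mem_word_cons))
    subst hii
    obtain ⟨-, hji, -, -, hLtail⟩ := isStaircase_cons.mp hL
    obtain ⟨-, hji', -, -, hLtail'⟩ := isStaircase_cons.mp hL'
    have hjj : j = j' := by
      rcases lt_trichotomy j j' with hlt | heq | hgt
      · exact absurd (h (j' - 1)) (pairFilter_word_cons_ne hlt hji' L L')
      · exact heq
      · exact absurd (h (j - 1)).symm (pairFilter_word_cons_ne hgt hji L' L)
    subst hjj
    refine congrArg _ (ih hLtail hLtail' fun t => ?_)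
    simpa only [word_cons, pairFilter_append, append_cancel_right_eq] using h t

variable [NeZero n]

theorem CommEquiv.pairFilter_eq {ω ω' : List ℕ} (hω : ∀ x ∈ ω, 1 ≤ x ∧ x ≤ n)
    (hω' : ∀ x ∈ ω', 1 ≤ x ∧ x ≤ n)
    (h : CommEquiv (CoxeterMatrix.A n) (ω.map (letter n)) (ω'.map (letter n))) (t : ℕ) :
    pairFilter t ω = pairFilter t ω' := by
  have hmap : ∀ v : List ℕ, (∀ x ∈ v, 1 ≤ x ∧ x ≤ n) → pairFilter t v =
      ((v.map (letter n)).filter fun a : Fin n => t ≤ (a : ℕ) + 1 ∧ (a : ℕ) + 1 ≤ t + 1).map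
        fun a : Fin n => (a : ℕ) + 1 := by
    intro v hv
    conv_lhs => rw [← map_val_succ_map_letter hv]
    rw [pairFilter, filter_map]
    rfl
  rw [hmap ω hω, hmap ω' hω', h.filter_eq fun a b ha hb => ?_]
  simp only [decide_eq_true_eq] at ha hb
  rw [Ne, A_eq_two_iff]
  omega

theorem IsStaircase.eq_of_commEquiv {c c' : ℕ} {L L' : List (ℕ × ℕ)} (hL : IsStaircase n c L)
    (hL' : IsStaircase n c' L')
    (h : CommEquiv (CoxeterMatrix.A n) ((word L).map (letter n)) ((word L').map (letter n))) :
    L = L' :=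
  hL.eq_of_pairFilter_eq hL' <| h.pairFilter_eq (fun _ hx => (hL.mem_word hx).imp_right And.left)
    (fun _ hx => (hL'.mem_word hx).imp_right And.left)

end Uniqueness

theorem exists_indexed_of_isStaircase {n c : ℕ} {L : List (ℕ × ℕ)} (hL : IsStaircase n c L)
    (hbot : L.Pairwise fun x y => y.2 < x.2) :
    ∃ (p : ℕ) (i j : ℕ → ℕ), (∀ k, k < p → 1 ≤ j k ∧ j k ≤ i k ∧ i k ≤ n) ∧
      (∀ k l, k < l → l < p → i k < i l) ∧ (∀ k l, k < l → l < p → j k < j l) ∧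
      word L = (range p).flatMap fun k => decW (i k) (j k) := by
  have hpw : L.reverse.Pairwise fun x y => x.1 < y.1 ∧ x.2 < y.2 :=
    pairwise_reverse.mpr (hL.2.and hbot)
  refine ⟨L.reverse.length, fun k => (L.reverse.getD k (0, 0)).1,
    fun k => (L.reverse.getD k (0, 0)).2, fun k hk => ?_, fun k l hkl hl => ?_,
    fun k l hkl hl => ?_, ?_⟩
  · dsimp only
    rw [getD_eq_getElem _ _ hk]
    have := hL.1 _ (mem_reverse.mp (getElem_mem hk))
    omega
  · simp only [getD_eq_getElem _ _ hl, getD_eq_getElem _ _ (hkl.trans hl)]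
    exact (pairwise_iff_getElem.mp hpw k l _ hl hkl).1
  · simp only [getD_eq_getElem _ _ hl, getD_eq_getElem _ _ (hkl.trans hl)]
    exact (pairwise_iff_getElem.mp hpw k l _ hl hkl).2
  · conv_lhs => rw [word, ← map_getD_range L.reverse (0, 0)]
    rw [flatMap_map]

theorem isStaircase_of_indexed {n p : ℕ} {i j : ℕ → ℕ}
    (hb : ∀ k, k < p → 1 ≤ j k ∧ j k ≤ i k ∧ i k ≤ n) (hi : ∀ k l, k < l → l < p → i k < i l) :
    IsStaircase n (n + 1) ((range p).map (fun k => (i k, j k))).reverse ∧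
      word ((range p).map (fun k => (i k, j k))).reverse
        = (range p).flatMap fun k => decW (i k) (j k) := by
  refine ⟨⟨fun b hb' => ?_, ?_⟩, by simp [word, flatMap_map]⟩
  · obtain ⟨k, hk, rfl⟩ := mem_map.mp (mem_reverse.mp hb')
    have := hb k (mem_range.mp hk)
    omega
  · rw [pairwise_reverse, pairwise_map, pairwise_iff_getElem]
    intro k l hk hl hkl
    simp only [getElem_range]
    exact hi k l hkl (by simpa using hl)

/-- Every fully commutative element of the type `Aₙ` Coxeter group has a unique reduced
expression of the form
`(σ_{i₁} ⋯ σ_{j₁})(σ_{i₂} ⋯ σ_{j₂}) ⋯ (σ_{i_p} ⋯ σ_{j_p})`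
with `i₁ < ⋯ < i_p`, `j₁ < ⋯ < j_p` and `j_k ≤ i_k`.  Here the (1-based) subscript `k`
corresponds to the generator indexed by `k - 1 : Fin n`. -/
theorem An_fc_normal_form (n : ℕ) [NeZero n] {W : Type*} [Group W]
    (cs : CoxeterSystem (CoxeterMatrix.Aₙ n) W) (u : W) (hu : IsFC cs u) :
    ∃! ω : List ℕ,
      (∃ (p : ℕ) (i j : ℕ → ℕ),
        (∀ k, k < p → 1 ≤ j k ∧ j k ≤ i k ∧ i k ≤ n) ∧
        (∀ k l, k < l → l < p → i k < i l) ∧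
        (∀ k l, k < l → l < p → j k < j l) ∧
        ω = (List.range p).flatMap fun k => decW (i k) (j k)) ∧
      IsRedexOf cs (ω.map fun k => ((k - 1 : ℕ) : Fin n)) u := by
  obtain ⟨L, hL, hLu⟩ := exists_staircase_isRedexOf cs u
  obtain ⟨p, i, j, hb, hi, hj, hword⟩ :=
    exists_indexed_of_isStaircase hL (hL.pairwise_snd_of_isFC hu hLu)
  refine ⟨word L, ⟨⟨p, i, j, hb, hi, hj, hword⟩, hLu⟩, ?_⟩
  rintro ω ⟨⟨p', i', j', hb', hi', -, rfl⟩, hωu⟩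
  obtain ⟨hL', hword'⟩ := isStaircase_of_indexed hb' hi'
  rw [← hword'] at hωu ⊢
  exact congrArg word (hL'.eq_of_commEquiv hL (hu _ _ hωu hLu))
end

section
/- In W(A_n), every full fully commutative element u (one with σ_1, σ_n ∈ Supp(u)) for which u ≠ σ_n σ_{n−1} ⋯ σ_2 σ_1 has a reduced expression of the form u = σ_i ⋯ σ_2 σ_1 · σ_r ⋯ σ_{n−1} σ_n · x, where 1 ≤ i ≤ n−1, 1 ≤ r ≤ n, i < r, and x is either the identity or has Supp(x) ⊆ {σ_2,…,σ_{n−1}}. -/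
open CoxeterSystem Fin.NatCast

/-- The increasing word `[i, i+1, ..., j]` of (1-based) generator subscripts. -/
def incW (i j : ℕ) : List ℕ := List.range' i (j + 1 - i)

/-!
In type A, a reduced word of a fully commutative element never contains two occurrences of `σₐ`
separated only by generators lying on one side of `σₐ`. Indeed, if the neighbour `σₐ₊₁` (say) does
not occur in between, `σₐ` commutes through and meets its twin, so the word is not reduced; if it
occurs once, commuting produces a factor `σₐ σₐ₊₁ σₐ` whose braid move leaves the commutation class;
if it occurs more often, two consecutive occurrences of `σₐ₊₁` are again separated only by letters
beyond it, and we recurse. In particular `σ₁` and `σₙ` occur exactly once.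

Starting from the occurrence of `σ₁`, the letters to its left are absorbed, from right to left,
into a decreasing run `σᵢ ⋯ σ₁`: each one extends the run, commutes past it, or already occurs in
it, which is forbidden. If `i = n` nothing can follow the run, so `u = σₙ ⋯ σ₁`. Otherwise `σₙ` lies
to the right of the run, and the same absorption produces the increasing run `σᵣ ⋯ σₙ`; finally
`i < r`, since otherwise `σᵣ` would occur twice with only smaller generators in between.
-/

namespace CommEquiv

variable {B : Type*} {M : CoxeterMatrix B}

theorem symm {ω₁ ω₂ : List B} (h : CommEquiv M ω₁ ω₂) : CommEquiv M ω₂ ω₁ := by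
  induction h with
  | refl => exact .refl
  | tail _ hmove ih =>
    obtain ⟨l, r, s, t, hst, rfl, rfl⟩ := hmove
    exact .head ⟨l, r, t, s, M.symmetric t s ▸ hst, rfl, rfl⟩ ih

theorem perm_s8 {ω₁ ω₂ : List B} (h : CommEquiv M ω₁ ω₂) : ω₁.Perm ω₂ := by
  induction h with
  | refl => rfl
  | tail _ hmove ih =>
    obtain ⟨l, r, s, t, -, rfl, rfl⟩ := hmove
    exact ih.trans ((List.Perm.swap t s r).append_left l)

theorem wordProd_eq_s8 {W : Type*} [Group W] (cs : CoxeterSystem M W) {ω₁ ω₂ : List B}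
    (h : CommEquiv M ω₁ ω₂) : cs.wordProd ω₁ = cs.wordProd ω₂ := by
  induction h with
  | refl => rfl
  | tail _ hmove ih =>
    obtain ⟨l, r, s, t, hst, rfl, rfl⟩ := hmove
    have hswap : cs.wordProd [s, t] = cs.wordProd [t, s] := by
      have := cs.wordProd_braidWord_eq s t
      rwa [CoxeterSystem.braidWord, CoxeterSystem.braidWord, M.symmetric t s, hst] at this
    have hsplit (x y : B) : l ++ x :: y :: r = l ++ [x, y] ++ r := by simp
    rw [ih, hsplit, hsplit, cs.wordProd_append, cs.wordProd_append, cs.wordProd_append,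
      cs.wordProd_append, hswap]

end CommEquiv

section Generic

variable {B : Type*} {M : CoxeterMatrix B}

theorem commEquiv_append_cons_append_s8 {a : B} {D : List B} (hD : ∀ c ∈ D, M a c = 2)
    (l r : List B) : CommEquiv M (l ++ a :: (D ++ r)) (l ++ D ++ a :: r) := by
  induction D generalizing l with
  | nil => simp only [List.nil_append, List.append_nil]; exact .refl
  | cons c D ih =>
    have := ih (fun d hd => hD d (by simp [hd])) (l ++ [c])
    simp only [List.append_assoc, List.cons_append, List.nil_append] at this ⊢
    exact .head ⟨l, D ++ r, a, c, hD c (by simp), rfl, rfl⟩ this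

variable {W : Type*} [Group W] {cs : CoxeterSystem M W} {u : W}

theorem IsRedexOf.of_commEquiv {ω₁ ω₂ : List B} (hr : IsRedexOf cs ω₁ u)
    (h : CommEquiv M ω₁ ω₂) : IsRedexOf cs ω₂ u := by
  obtain ⟨hprod, hred⟩ := hr
  refine ⟨h.wordProd_eq_s8 cs ▸ hprod, ?_⟩
  rw [CoxeterSystem.IsReduced, ← h.wordProd_eq_s8 cs, ← h.perm_s8.length_eq]
  exact hred

theorem IsFC.perm_s8 (hu : IsFC cs u) {ω₁ ω₂ : List B} (h₁ : IsRedexOf cs ω₁ u)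
    (h₂ : IsRedexOf cs ω₂ u) : ω₁.Perm ω₂ :=
  (hu ω₁ ω₂ h₁ h₂).perm_s8

theorem not_isRedexOf_append_cons_cons (l r : List B) (a : B) :
    ¬ IsRedexOf cs (l ++ a :: a :: r) u := by
  rintro ⟨-, hred⟩
  have hprod : cs.wordProd (l ++ a :: a :: r) = cs.wordProd (l ++ r) := by
    simp [cs.wordProd_append, cs.wordProd_cons, ← mul_assoc]
  have := cs.length_wordProd_le (l ++ r)
  rw [← hprod, hred] at this
  simp at this

theorem IsFC.not_isRedexOf_braid (hu : IsFC cs u) (l r : List B) {a b : B}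
    (hab : M a b = 3) : ¬ IsRedexOf cs (l ++ a :: b :: a :: r) u := by
  classical
  intro hr
  have hne : a ≠ b := by rintro rfl; simp at hab
  have hbraid : cs.wordProd [a, b, a] = cs.wordProd [b, a, b] := by
    have := cs.wordProd_braidWord_eq b a
    rwa [CoxeterSystem.braidWord, CoxeterSystem.braidWord, M.symmetric b a, hab] at this
  have hsplit (x y : B) : l ++ x :: y :: x :: r = l ++ [x, y, x] ++ r := by simp
  have hprod : cs.wordProd (l ++ a :: b :: a :: r) = cs.wordProd (l ++ b :: a :: b :: r) := by
    rw [hsplit, hsplit, cs.wordProd_append, cs.wordProd_append, cs.wordProd_append,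
      cs.wordProd_append, hbraid]
  have hr' : IsRedexOf cs (l ++ b :: a :: b :: r) u :=
    ⟨hprod ▸ hr.1, by rw [CoxeterSystem.IsReduced, ← hprod, hr.2]; simp⟩
  have := (hu.perm_s8 hr hr').count_eq a
  simp [hne.symm] at this

theorem not_isRedexOf_of_commute_between {l D r : List B} {a : B} (hD : ∀ c ∈ D, M a c = 2) :
    ¬ IsRedexOf cs (l ++ a :: (D ++ a :: r)) u := fun hr =>
  not_isRedexOf_append_cons_cons (l ++ D) r a
    (by simpa using hr.of_commEquiv (commEquiv_append_cons_append_s8 hD l (a :: r)))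

theorem IsFC.not_isRedexOf_braid_between (hu : IsFC cs u)
    {l D₁ D₂ r : List B} {a b : B} (hab : M a b = 3) (hD₁ : ∀ c ∈ D₁, M a c = 2)
    (hD₂ : ∀ c ∈ D₂, M a c = 2) : ¬ IsRedexOf cs (l ++ a :: (D₁ ++ b :: D₂ ++ a :: r)) u := by
  intro hr
  have h₁ := commEquiv_append_cons_append_s8 hD₁ l (b :: D₂ ++ a :: r)
  have h₂ := (commEquiv_append_cons_append_s8 hD₂ (l ++ D₁ ++ [a, b]) r).symm
  simp only [List.append_assoc, List.cons_append, List.nil_append] at h₁ h₂ hr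
  exact hu.not_isRedexOf_braid (l ++ D₁) (D₂ ++ r) hab
    (by simpa using hr.of_commEquiv (h₁.trans h₂))

end Generic

namespace CoxeterMatrix

variable {n : ℕ}

theorem A_apply_eq_two {i j : Fin n} (h : (i : ℕ) + 2 ≤ j ∨ (j : ℕ) + 2 ≤ i) :
    CoxeterMatrix.A n i j = 2 := by
  have hij : i ≠ j := by rintro rfl; omega
  simp only [CoxeterMatrix.A, Matrix.of_apply, if_neg hij]
  rw [if_neg (by omega)]

theorem A_apply_eq_three {i j : Fin n} (h : (i : ℕ) + 1 = j ∨ (j : ℕ) + 1 = i) :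
    CoxeterMatrix.A n i j = 3 := by
  have hij : i ≠ j := by rintro rfl; omega
  simp only [CoxeterMatrix.A, Matrix.of_apply, if_neg hij]
  rw [if_pos (by omega)]

end CoxeterMatrix

section TypeA

variable {n : ℕ} {W : Type*} [Group W] {cs : CoxeterSystem (CoxeterMatrix.A n) W} {u : W}

theorem IsFC.not_isRedexOf_of_signed_side (hu : IsFC cs u) {δ : ℤ} (hδ : δ = 1 ∨ δ = -1)
    {a : Fin n} {l D r : List (Fin n)} (hD : ∀ d ∈ D, 0 ≤ δ * ((d : ℕ) - (a : ℕ) : ℤ)) :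
    ¬ IsRedexOf cs (l ++ a :: (D ++ a :: r)) u := by
  induction hlen : D.length using Nat.strong_induction_on generalizing a l D r with
  | _ k ih =>
  subst hlen
  intro hr
  by_cases haD : a ∈ D
  · obtain ⟨D₁, D₂, rfl⟩ := List.append_of_mem haD
    exact ih _ (by simp) (D := D₁) (r := D₂ ++ a :: r) (fun d hd => hD d (by simp [hd]))
      rfl (by simpa using hr)
  have hside : ∀ d ∈ D, 1 ≤ δ * ((d : ℕ) - (a : ℕ) : ℤ) := fun d hd => by
    have := hD d hd
    have : (d : ℕ) ≠ a := fun h => haD (Fin.ext h ▸ hd)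
    rcases hδ with rfl | rfl <;> omega
  have hcomm : ∀ d ∈ D, ((d : ℕ) : ℤ) ≠ a + δ → CoxeterMatrix.A n a d = 2 := fun d hd hdb => by
    have := hside d hd
    exact CoxeterMatrix.A_apply_eq_two (by rcases hδ with rfl | rfl <;> omega)
  obtain ⟨b, hbD, hb⟩ : ∃ b ∈ D, ((b : ℕ) : ℤ) = a + δ := by
    by_contra! hb
    exact not_isRedexOf_of_commute_between (fun d hd => hcomm d hd (hb d hd)) hr
  have hrec {l' E r'} (hlt : E.length < D.length) (hE : ∀ d ∈ E, d ∈ D) :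
      ¬ IsRedexOf cs (l' ++ b :: (E ++ b :: r')) u :=
    ih _ hlt (fun d hd => by
      have := hside d (hE d hd)
      rcases hδ with rfl | rfl <;> omega) rfl
  have hne_b {d} (hdb : d ≠ b) : ((d : ℕ) : ℤ) ≠ a + δ := fun h => hdb (Fin.ext (by omega))
  obtain ⟨D₁, D₂, rfl, h₁⟩ := List.eq_append_cons_of_mem hbD
  by_cases h₂ : b ∈ D₂
  · obtain ⟨E₁, E₂, rfl⟩ := List.append_of_mem h₂
    exact hrec (l' := l ++ a :: D₁) (E := E₁) (r' := E₂ ++ a :: r) (by simp; omega)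
      (fun d hd => by simp [hd]) (by simpa using hr)
  refine hu.not_isRedexOf_braid_between (D₁ := D₁) (D₂ := D₂)
    (CoxeterMatrix.A_apply_eq_three (j := b) (by rcases hδ with rfl | rfl <;> omega))
    (fun d hd => hcomm d (by simp [hd]) (hne_b ?_))
    (fun d hd => hcomm d (by simp [hd]) (hne_b ?_)) (by simpa using hr)
  · rintro rfl; exact h₁ hd
  · rintro rfl; exact h₂ hd

theorem IsFC.not_isRedexOf_of_one_side (hu : IsFC cs u) {a : Fin n} {l D r : List (Fin n)}
    (hD : (∀ d ∈ D, a ≤ d) ∨ (∀ d ∈ D, d ≤ a)) : ¬ IsRedexOf cs (l ++ a :: (D ++ a :: r)) u := by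
  rcases hD with hD | hD
  · exact hu.not_isRedexOf_of_signed_side (.inl rfl) fun d hd => by have := hD d hd; omega
  · exact hu.not_isRedexOf_of_signed_side (.inr rfl) fun d hd => by have := hD d hd; omega

theorem IsFC.not_mem_of_isRedexOf_append_cons (hu : IsFC cs u) {a : Fin n}
    (ha : (∀ d, a ≤ d) ∨ (∀ d, d ≤ a)) {l r : List (Fin n)} (hr : IsRedexOf cs (l ++ a :: r) u) :
    a ∉ l ++ r := by
  have hside (D : List (Fin n)) : (∀ d ∈ D, a ≤ d) ∨ (∀ d ∈ D, d ≤ a) :=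
    ha.imp (fun h d _ => h d) (fun h d _ => h d)
  intro hmem
  rcases List.mem_append.1 hmem with hl | hr'
  · obtain ⟨l, D, rfl⟩ := List.append_of_mem hl
    exact hu.not_isRedexOf_of_one_side (hside D) (by simpa using hr)
  · obtain ⟨D, r, rfl⟩ := List.append_of_mem hr'
    exact hu.not_isRedexOf_of_one_side (hside D) hr

theorem IsFC.not_isRedexOf_cons_append_of_mem (hu : IsFC cs u) {R : List (Fin n)}
    (hR : R.SortedGE ∨ R.SortedLE) {c : Fin n} (hc : c ∈ R) (L Q : List (Fin n)) :
    ¬ IsRedexOf cs (L ++ c :: (R ++ Q)) u := by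
  obtain ⟨X, Y, rfl⟩ := List.append_of_mem hc
  refine fun hr => hu.not_isRedexOf_of_one_side (D := X) (r := Y ++ Q) ?_ (by simpa using hr)
  rcases hR with hR | hR
  · exact .inl fun x hx => (List.pairwise_append.1 hR.pairwise).2.2 x hx c (by simp)
  · exact .inr fun x hx => (List.pairwise_append.1 hR.pairwise).2.2 x hx c (by simp)

theorem IsFC.not_isRedexOf_append_cons_of_mem (hu : IsFC cs u) {R : List (Fin n)}
    (hR : R.SortedGE ∨ R.SortedLE) {c : Fin n} (hc : c ∈ R) (L Q : List (Fin n)) :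
    ¬ IsRedexOf cs (L ++ R ++ c :: Q) u := by
  obtain ⟨X, Y, rfl⟩ := List.append_of_mem hc
  refine fun hr => hu.not_isRedexOf_of_one_side (l := L ++ X) (D := Y) ?_ (by simpa using hr)
  rcases hR with hR | hR
  · exact .inr (List.pairwise_cons.1 (List.pairwise_append.1 hR.pairwise).2.1).1
  · exact .inl (List.pairwise_cons.1 (List.pairwise_append.1 hR.pairwise).2.1).1

end TypeA

section Words

variable {n : ℕ} [NeZero n]

def decWord (n i : ℕ) [NeZero n] : List (Fin n) := (decW i 1).map fun k => ((k - 1 : ℕ) : Fin n)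

def incWord (n r : ℕ) [NeZero n] : List (Fin n) := (incW r n).map fun k => ((k - 1 : ℕ) : Fin n)

theorem mem_decWord {i : ℕ} {c : Fin n} : c ∈ decWord n i ↔ (c : ℕ) < i := by
  simp only [decWord, decW, List.mem_map, List.mem_reverse, List.mem_range'_1]
  constructor
  · rintro ⟨k, hk, rfl⟩
    rw [Fin.val_natCast]
    exact lt_of_le_of_lt (Nat.mod_le _ _) (by omega)
  · exact fun hc => ⟨c + 1, by omega, by simp⟩

theorem decWord_val_succ (c : Fin n) : decWord n (c + 1) = c :: decWord n c := by
  simp [decWord, decW, List.range'_concat]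

theorem sortedGE_decWord {i : ℕ} (hi : i ≤ n) : (decWord n i).SortedGE := by
  refine List.Pairwise.sortedGE ?_
  simp only [decWord, decW, List.pairwise_map, List.pairwise_reverse]
  refine (List.pairwise_lt_range' (s := 1) (n := i + 1 - 1)).imp_of_mem fun ha hb hab => ?_
  rw [List.mem_range'_1] at ha hb
  rw [ge_iff_le, Fin.le_def, Fin.val_natCast, Fin.val_natCast, Nat.mod_eq_of_lt (by omega),
    Nat.mod_eq_of_lt (by omega)]
  omega

theorem mem_incWord {r : ℕ} {c : Fin n} : c ∈ incWord n r ↔ r ≤ (c : ℕ) + 1 := by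
  simp only [incWord, incW, List.mem_map, List.mem_range'_1]
  constructor
  · rintro ⟨k, hk, rfl⟩
    have := NeZero.pos n
    rw [Fin.val_natCast, Nat.mod_eq_of_lt (by omega)]
    omega
  · exact fun hc => ⟨c + 1, by omega, by simp⟩

theorem incWord_val_succ (c : Fin n) : incWord n (c + 1) = c :: incWord n (c + 2) := by
  rw [incWord, incW, show n + 1 - (c + 1) = (n + 1 - (c + 2)) + 1 by omega, List.range'_succ]
  simp [incWord, incW]

theorem sortedLE_incWord (r : ℕ) : (incWord n r).SortedLE := by
  refine List.Pairwise.sortedLE ?_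
  simp only [incWord, incW, List.pairwise_map]
  refine (List.pairwise_le_range' (s := r) (n := n + 1 - r)).imp_of_mem fun ha hb hab => ?_
  rw [List.mem_range'_1] at ha hb
  have := NeZero.pos n
  rw [Fin.le_def, Fin.val_natCast, Fin.val_natCast, Nat.mod_eq_of_lt (by omega),
    Nat.mod_eq_of_lt (by omega)]
  omega

theorem val_natCast_sub_one : (((n - 1 : ℕ) : Fin n) : ℕ) = n - 1 :=
  Fin.val_cast_of_lt (Nat.sub_lt (NeZero.pos n) one_pos)

theorem map_natCast_pred_map_val_succ (x : List (Fin n)) :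
    (x.map fun c : Fin n => (c : ℕ) + 1).map (fun k => ((k - 1 : ℕ) : Fin n)) = x := by
  rw [List.map_map]
  exact List.map_id'' (fun c => by simp) x

theorem decWord_one : decWord n 1 = [0] := by simp [decWord, decW]

theorem incWord_self : incWord n n = [((n - 1 : ℕ) : Fin n)] := by simp [incWord, incW]

end Words

section NormalForm

variable {n : ℕ} [NeZero n] {W : Type*} [Group W] {cs : CoxeterSystem (CoxeterMatrix.A n) W}
  {u : W}

theorem IsFC.exists_isRedexOf_decWord_append_of_append (hu : IsFC cs u) (P : List (Fin n))
    {i : ℕ} (hi : i ≤ n) {Q : List (Fin n)} (hr : IsRedexOf cs (P ++ decWord n i ++ Q) u) :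
    ∃ i' Q', i ≤ i' ∧ i' ≤ n ∧ IsRedexOf cs (decWord n i' ++ Q') u ∧ Q' ⊆ P ++ Q := by
  induction P using List.reverseRecOn generalizing i Q with
  | nil => exact ⟨i, Q, le_rfl, hi, by simpa using hr, by simp⟩
  | append_singleton P c ih =>
    simp only [List.append_assoc, List.singleton_append] at hr
    rcases lt_trichotomy (c : ℕ) i with hci | rfl | hci
    · exact absurd hr <| hu.not_isRedexOf_cons_append_of_mem (.inl (sortedGE_decWord hi))
        (mem_decWord.2 hci) P Q
    · obtain ⟨i', Q', hle, hi', hr', hQ'⟩ :=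
        ih (i := c + 1) c.isLt (by simpa [decWord_val_succ] using hr)
      exact ⟨i', Q', by omega, hi', hr', List.Subset.trans hQ' (by simp)⟩
    · have hcomm (d) (hd : d ∈ decWord n i) : CoxeterMatrix.A n c d = 2 :=
        CoxeterMatrix.A_apply_eq_two (by have := mem_decWord.1 hd; omega)
      obtain ⟨i', Q', hle, hi', hr', hQ'⟩ :=
        ih hi (by simpa using hr.of_commEquiv (commEquiv_append_cons_append_s8 hcomm P Q))
      exact ⟨i', Q', hle, hi', hr', List.Subset.trans hQ' (by simp)⟩

theorem IsFC.exists_isRedexOf_incWord_append_of_append (hu : IsFC cs u) (L P : List (Fin n))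
    {r : ℕ} (hr1 : 1 ≤ r) {x : List (Fin n)} (hr : IsRedexOf cs (L ++ P ++ incWord n r ++ x) u) :
    ∃ r' x', 1 ≤ r' ∧ r' ≤ r ∧ IsRedexOf cs (L ++ incWord n r' ++ x') u ∧ x' ⊆ P ++ x := by
  induction P using List.reverseRecOn generalizing r x with
  | nil => exact ⟨r, x, hr1, le_rfl, by simpa using hr, by simp⟩
  | append_singleton P c ih =>
    simp only [List.append_assoc, List.singleton_append] at hr
    rcases lt_trichotomy ((c : ℕ) + 2) r with hcr | hcr | hcr
    · have hcomm (d) (hd : d ∈ incWord n r) : CoxeterMatrix.A n c d = 2 :=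
        CoxeterMatrix.A_apply_eq_two (by have := mem_incWord.1 hd; omega)
      have hpush := commEquiv_append_cons_append_s8 hcomm (L ++ P) x
      simp only [List.append_assoc] at hpush
      obtain ⟨r', x', hr1', hle, hr', hx'⟩ := ih hr1 (by simpa using hr.of_commEquiv hpush)
      exact ⟨r', x', hr1', hle, hr', List.Subset.trans hx' (by simp)⟩
    · subst hcr
      obtain ⟨r', x', hr1', hle, hr', hx'⟩ :=
        ih (r := c + 1) (by omega) (by simpa [incWord_val_succ] using hr)
      exact ⟨r', x', hr1', by omega, hr', List.Subset.trans hx' (by simp)⟩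
    · exact absurd (by simpa using hr) <| hu.not_isRedexOf_cons_append_of_mem
        (.inr (sortedLE_incWord r)) (mem_incWord.2 (by omega)) (L ++ P) x

theorem IsFC.exists_isRedexOf_decWord_append (hu : IsFC cs u) {ω : List (Fin n)}
    (hω : IsRedexOf cs ω u) (h0 : 0 ∈ ω) :
    ∃ i Q, 1 ≤ i ∧ i ≤ n ∧ IsRedexOf cs (decWord n i ++ Q) u ∧ 0 ∉ Q := by
  obtain ⟨P, Q, rfl⟩ := List.append_of_mem h0
  have h0PQ := hu.not_mem_of_isRedexOf_append_cons (.inl Fin.zero_le) hω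
  obtain ⟨i, Q', hi, hin, hr, hQ'⟩ := hu.exists_isRedexOf_decWord_append_of_append P
    NeZero.one_le (by simpa [decWord_one] using hω)
  exact ⟨i, Q', hi, hin, hr, fun h => h0PQ (hQ' h)⟩

theorem IsFC.eq_nil_of_isRedexOf_decWord_append (hu : IsFC cs u) {Q : List (Fin n)}
    (hr : IsRedexOf cs (decWord n n ++ Q) u) : Q = [] := by
  obtain _ | ⟨c, Q⟩ := Q
  · rfl
  · exact absurd hr <| hu.not_isRedexOf_append_cons_of_mem (.inl (sortedGE_decWord le_rfl))
      (mem_decWord.2 c.isLt) [] Q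

theorem IsFC.lt_of_isRedexOf_decWord_append_incWord (hu : IsFC cs u) {i r : ℕ} (hi : i ≤ n)
    (hr1 : 1 ≤ r) {x : List (Fin n)} (hr : IsRedexOf cs (decWord n i ++ incWord n r ++ x) u) :
    i < r := by
  by_contra hri
  obtain ⟨c, rfl⟩ : ∃ c : Fin n, r = c + 1 := ⟨⟨r - 1, by omega⟩, by simp; omega⟩
  rw [incWord_val_succ] at hr
  exact hu.not_isRedexOf_append_cons_of_mem (.inl (sortedGE_decWord hi))
    ((mem_decWord (c := c)).2 (by omega)) [] _ (by simpa using hr)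

theorem IsFC.exists_isRedexOf_decWord_append_incWord_append (hu : IsFC cs u) {i : ℕ}
    (hi : i ≤ n) {Q : List (Fin n)} (hr : IsRedexOf cs (decWord n i ++ Q) u)
    (htop : ((n - 1 : ℕ) : Fin n) ∈ Q) :
    ∃ r x, i < r ∧ r ≤ n ∧ IsRedexOf cs (decWord n i ++ incWord n r ++ x) u ∧
      ((n - 1 : ℕ) : Fin n) ∉ x ∧ x ⊆ Q := by
  obtain ⟨P, x, rfl⟩ := List.append_of_mem htop
  have htop_le (d : Fin n) : d ≤ ((n - 1 : ℕ) : Fin n) := by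
    rw [Fin.le_def, val_natCast_sub_one]
    omega
  have htopPx := hu.not_mem_of_isRedexOf_append_cons (.inr htop_le) (l := decWord n i ++ P)
    (by simpa using hr)
  obtain ⟨r, x', hr1, hrn, hr', hx'⟩ := hu.exists_isRedexOf_incWord_append_of_append
    (decWord n i) P (r := n) (x := x) NeZero.one_le (by simpa [incWord_self] using hr)
  refine ⟨r, x', hu.lt_of_isRedexOf_decWord_append_incWord hi hr1 hr', hrn, hr',
    fun h => htopPx (by simpa using Or.inr (hx' h)), List.Subset.trans hx' (by simp)⟩

end NormalForm

/-- Every full fully commutative element `u` of `W(Aₙ)` other than `σₙ σₙ₋₁ ⋯ σ₁` has a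
reduced expression `σᵢ ⋯ σ₂ σ₁ · σᵣ ⋯ σₙ₋₁ σₙ · x` with `1 ≤ i ≤ n-1`, `1 ≤ r ≤ n`,
`i < r`, and `x` empty or supported in `{σ₂, …, σₙ₋₁}`.  The (1-based) subscript `k`
corresponds to the generator `k - 1 : Fin n`. -/
theorem full_fc_form (n : ℕ) [NeZero n] {W : Type*} [Group W]
    (cs : CoxeterSystem (CoxeterMatrix.Aₙ n) W) (u : W) (hu : IsFC cs u)
    (hfull : ∃ ω, IsRedexOf cs ω u ∧ ((0 : ℕ) : Fin n) ∈ ω ∧ ((n - 1 : ℕ) : Fin n) ∈ ω)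
    (hne : u ≠ cs.wordProd ((decW n 1).map fun k => ((k - 1 : ℕ) : Fin n))) :
    ∃ (i r : ℕ) (x : List ℕ), 1 ≤ i ∧ i ≤ n - 1 ∧ 1 ≤ r ∧ r ≤ n ∧ i < r ∧
      (∀ k ∈ x, 2 ≤ k ∧ k ≤ n - 1) ∧
      IsRedexOf cs ((decW i 1 ++ incW r n ++ x).map fun k => ((k - 1 : ℕ) : Fin n)) u := by
  obtain ⟨ω, hω, h0, htop⟩ := hfull
  obtain ⟨i, Q, hi1, hin_le, hr, h0Q⟩ := hu.exists_isRedexOf_decWord_append hω (by simpa using h0)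
  have hin : i < n := by
    refine lt_of_le_of_ne hin_le fun hi => hne ?_
    subst hi
    rw [← hr.1, hu.eq_nil_of_isRedexOf_decWord_append hr, List.append_nil]
    rfl
  have htopQ : ((n - 1 : ℕ) : Fin n) ∈ Q := by
    refine (List.mem_append.1 ((hu.perm_s8 hω hr).subset htop)).resolve_left fun h => ?_
    have := mem_decWord.1 h
    rw [val_natCast_sub_one] at this
    omega
  obtain ⟨r, x, hir, hrn, hrx, htopx, hxQ⟩ :=
    hu.exists_isRedexOf_decWord_append_incWord_append hin.le hr htopQ
  refine ⟨i, r, x.map fun c : Fin n => (c : ℕ) + 1, hi1, by omega, by omega, hrn, hir, ?_, ?_⟩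
  · simp only [List.mem_map]
    rintro _ ⟨c, hc, rfl⟩
    have h0c : (c : ℕ) ≠ 0 := Fin.val_ne_zero_iff.2 fun h => h0Q (h ▸ hxQ hc)
    have htopc : (c : ℕ) ≠ n - 1 := by
      rw [← val_natCast_sub_one]
      exact Fin.val_ne_iff.2 fun h => htopx (h ▸ hc)
    omega
  · rw [List.map_append, List.map_append, map_natCast_pred_map_val_succ]
    exact hrx
end

section
/- Every fully commutative element w of the affine Coxeter group W(Ã_2) (generators σ_1, σ_2, a_3, all pairwise braid relations of order 3) has exactly one of the following forms: w = x (σ_2σ_1a_3)^k y with x ∈ {1, a_3, σ_1a_3} and y ∈ {1, σ_2, σ_2σ_1}, or w = x' (σ_1σ_2a_3)^k y' with x' ∈ {1, a_3, σ_2a_3} and y' ∈ {1, σ_1, σ_1σ_2}, for some integer k ≥ 0. -/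
/-!
In `Ã₂` every two generators braid, so there are no commutation moves and a fully commutative
element has a unique reduced word. That word contains no factor `s s` (it is reduced) and no
factor `s t s` (a braid move would give a second reduced word). With only three letters, each
letter therefore differs from the two before it, so the word runs through the generators
cyclically in one direction, and cutting it at the occurrences of `a₃` gives `x · period^k · y`.
-/

open CoxeterSystem

/-- The Coxeter matrix of affine type Ãₙ: generators indexed by `Fin (n+1)` arranged in a
cycle (index `k` is `σ_{k+1}` for `k < n`, and index `n` is `a_{n+1}`); cyclically adjacent
generators braid with order 3, and all other pairs commute. -/
def affineAMatrix (n : ℕ) : CoxeterMatrix (Fin (n + 1)) where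
  M := Matrix.of fun i j : Fin (n + 1) =>
    if i = j then 1 else if i - j = 1 ∨ j - i = 1 then 3 else 2
  isSymm := by
    unfold Matrix.IsSymm
    ext i j
    simp only [Matrix.transpose_apply, Matrix.of_apply]
    by_cases h : i = j
    · simp [h]
    · simp [h, Ne.symm h, or_comm]
  diagonal := by simp
  off_diagonal := by aesop

namespace CoxeterSystem

variable {B W : Type*} [Group W] {M : CoxeterMatrix B} (cs : CoxeterSystem M W)

theorem wordProd_flatten_replicate (ω : List B) (k : ℕ) :
    cs.wordProd (List.replicate k ω).flatten = cs.wordProd ω ^ k := by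
  induction k with
  | zero => simp
  | succ k ih => rw [List.replicate_succ, List.flatten_cons, wordProd_append, ih, pow_succ']

theorem wordProd_braid {s t : B} (hst : M s t = 3) :
    cs.wordProd [s, t, s] = cs.wordProd [t, s, t] := by
  have h := cs.wordProd_braidWord_eq t s
  rw [braidWord, braidWord, M.symmetric t s, hst] at h
  simpa [alternatingWord] using h

variable {cs}

theorem IsReduced.of_isInfix {ω ω' : List B} (hω : cs.IsReduced ω) (h : ω' <:+: ω) :
    cs.IsReduced ω' := by
  obtain ⟨l, r, rfl⟩ := h
  simpa using (hω.drop l.length).take ω'.length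

theorem IsReduced.not_isInfix_pair {ω : List B} (hω : cs.IsReduced ω) (s : B) :
    ¬ [s, s] <:+: ω := fun h ↦ by
  simpa [IsReduced, wordProd_cons] using hω.of_isInfix h

end CoxeterSystem

theorem CommEquiv.eq_of_forall_ne_two {B : Type*} {M : CoxeterMatrix B}
    (hM : ∀ s t, M s t ≠ 2) {ω₁ ω₂ : List B} (h : CommEquiv M ω₁ ω₂) : ω₁ = ω₂ := by
  induction h with
  | refl => rfl
  | tail _ hmove =>
    obtain ⟨_, _, s, t, hst, _⟩ := hmove
    exact absurd hst (hM s t)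

theorem IsFC.not_isInfix_braid {B W : Type*} [Group W] {M : CoxeterMatrix B}
    {cs : CoxeterSystem M W} (hM : ∀ s t, M s t ≠ 2) {w : W} (hw : IsFC cs w)
    {ω : List B} (hω : IsRedexOf cs ω w) {s t : B} (hst : M s t = 3) :
    ¬ [s, t, s] <:+: ω := by
  rintro ⟨l, r, rfl⟩
  have hprod : cs.wordProd (l ++ [t, s, t] ++ r) = w := by
    rw [← hω.1, wordProd_append, wordProd_append, wordProd_append, wordProd_append,
      cs.wordProd_braid hst]
  have hred : cs.IsReduced (l ++ [t, s, t] ++ r) := by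
    rw [CoxeterSystem.IsReduced, hprod, ← hω.1, hω.2]
    simp
  have heq := (hw _ _ hω ⟨hprod, hred⟩).eq_of_forall_ne_two hM
  have hts : s = t := (List.cons.inj (List.append_cancel_left (List.append_cancel_right heq))).1
  rw [hts, M.diagonal] at hst
  exact absurd hst (by decide)

theorem affineAMatrix_two_ne_two (i j : Fin 3) : affineAMatrix 2 i j ≠ 2 := by
  fin_cases i <;> fin_cases j <;> decide

theorem affineAMatrix_two_of_ne {i j : Fin 3} (h : i ≠ j) : affineAMatrix 2 i j = 3 := by
  fin_cases i <;> fin_cases j <;> first | decide | exact absurd rfl h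

def arithProg {G : Type*} [AddMonoid G] (a d : G) : ℕ → List G
  | 0 => []
  | n + 1 => a :: arithProg (a + d) d n

section arithProg

variable {G : Type*} [AddMonoid G]

theorem arithProg_add (a d : G) (m n : ℕ) :
    arithProg a d (m + n) = arithProg a d m ++ arithProg (a + m • d) d n := by
  induction m generalizing a with
  | zero => simp [arithProg]
  | succ m ih => rw [Nat.succ_add, arithProg, arithProg, ih, succ_nsmul', add_assoc]; rfl

theorem arithProg_mul_add {a d : G} {m : ℕ} (h : m • d = 0) (k r : ℕ) :
    arithProg a d (m * k + r) =
      (List.replicate k (arithProg a d m)).flatten ++ arithProg a d r := by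
  induction k with
  | zero => simp
  | succ k ih =>
    rw [Nat.mul_succ, Nat.add_right_comm, Nat.add_comm, arithProg_add, h, add_zero, ih,
      List.replicate_succ, List.flatten_cons, List.append_assoc]

end arithProg

open Fin.CommRing

theorem exists_eq_arithProg {ω : List (Fin 3)} (hpair : ∀ s, ¬ [s, s] <:+: ω)
    (hbraid : ∀ s t, s ≠ t → ¬ [s, t, s] <:+: ω) :
    ∃ a d n, d ≠ 0 ∧ ω = arithProg a d n := by
  induction ω with
  | nil => exact ⟨0, 1, 0, by decide, rfl⟩
  | cons a ω ih =>
    obtain ⟨b, d, n, hd, rfl⟩ := ih (fun s h ↦ hpair s (List.infix_cons h))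
      (fun s t hst h ↦ hbraid s t hst (List.infix_cons h))
    rcases n with _ | n
    · exact ⟨a, 1, 1, one_ne_zero, rfl⟩
    have hab : a ≠ b := fun h ↦ hpair a ⟨[], _, by rw [h]; rfl⟩
    rcases n with _ | n
    · exact ⟨a, b - a, 2, sub_ne_zero.2 hab.symm, by simp [arithProg]⟩
    have habd : a ≠ b + d := fun h ↦ hbraid a b hab ⟨[], _, by rw [h]; rfl⟩
    have step : ∀ a b d : Fin 3, d ≠ 0 → a ≠ b → a ≠ b + d → a + d = b := by decide
    exact ⟨a, d, n + 3, hd, by rw [← step a b d hd hab habd]; rfl⟩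

section affineA2

variable {W : Type*} [Group W] (cs : CoxeterSystem (affineAMatrix 2) W)

/-- For `d = 2` and `d = 1` these are the two families of the classification: `x` runs over the
proper suffixes and `y` over the proper prefixes of the period `s_{2+d} s_{2+2d} s_2`. -/
def CyclicForm (d : Fin 3) (w : W) : Prop :=
  ∃ (k : ℕ) (x y : W),
    x ∈ ({1, cs.simple 2, cs.simple (2 - d) * cs.simple 2} : Set W) ∧
    y ∈ ({1, cs.simple (2 + d), cs.simple (2 + d) * cs.simple (2 + d + d)} : Set W) ∧
    w = x * (cs.simple (2 + d) * cs.simple (2 + d + d) * cs.simple 2) ^ k * y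

theorem wordProd_arithProg_mem_suffixes {a d : Fin 3} {j : ℕ} (hj : j < 3)
    (ha : a + j • d = 2 + d) :
    cs.wordProd (arithProg a d j) ∈
      ({1, cs.simple 2, cs.simple (2 - d) * cs.simple 2} : Set W) := by
  interval_cases j
  · simp [arithProg]
  · obtain rfl : a = 2 := by simpa using ha
    simp [arithProg]
  · obtain rfl : a = 2 - d := by linear_combination ha
    simp [arithProg, wordProd_cons]

theorem wordProd_arithProg_mem_prefixes (e d : Fin 3) {r : ℕ} (hr : r < 3) :
    cs.wordProd (arithProg e d r) ∈
      ({1, cs.simple e, cs.simple e * cs.simple (e + d)} : Set W) := by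
  interval_cases r <;> simp [arithProg, wordProd_cons]

theorem cyclicForm_wordProd_arithProg {a d : Fin 3} {j n : ℕ} (hj : j < 3) (hjn : j ≤ n)
    (ha : a + j • d = 2 + d) : CyclicForm cs d (cs.wordProd (arithProg a d n)) := by
  obtain ⟨k, r, hr, rfl⟩ : ∃ k r, r < 3 ∧ n = j + (3 * k + r) :=
    ⟨(n - j) / 3, (n - j) % 3, Nat.mod_lt _ (by norm_num), by omega⟩
  have hperiod : ∀ d : Fin 3, 3 • d = 0 := by decide
  have hcycle : ∀ d : Fin 3, 2 + d + d + d = 2 := by decide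
  refine ⟨k, _, _, wordProd_arithProg_mem_suffixes cs hj ha,
    wordProd_arithProg_mem_prefixes cs (2 + d) d hr, ?_⟩
  rw [arithProg_add, ha, arithProg_mul_add (hperiod d), wordProd_append, wordProd_append,
    wordProd_flatten_replicate, ← mul_assoc]
  simp [arithProg, wordProd_cons, hcycle, mul_assoc]

/-- A single letter is a progression for every step, which must then be chosen so that the
letter is a proper suffix or prefix of the period. -/
theorem exists_anchored_arithProg_eq (a : Fin 3) {d : Fin 3} (hd : d ≠ 0) (n : ℕ) :
    ∃ a' d' j, (d' = 2 ∨ d' = 1) ∧ j < 3 ∧ j ≤ n ∧ a' + j • d' = 2 + d' ∧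
      arithProg a d n = arithProg a' d' n := by
  rcases Nat.lt_or_ge n 2 with hn | hn
  · interval_cases n
    · exact ⟨2 + 2, 2, 0, .inl rfl, by norm_num, le_rfl, rfl, rfl⟩
    · obtain ⟨d', hd', j, hj, ha⟩ : ∃ d' : Fin 3, (d' = 2 ∨ d' = 1) ∧
          ∃ j < 2, a + j • d' = 2 + d' := by
        revert a; decide
      exact ⟨a, d', j, hd', by omega, by omega, ha, rfl⟩
  · have hd' : d = 2 ∨ d = 1 := by
      revert d; decide
    obtain ⟨j, hj, ha⟩ : ∃ j < 3, a + j • d = 2 + d := by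
      clear hd'; revert a d; decide
    exact ⟨a, d, j, hd', hj, by omega, ha, rfl⟩

theorem cyclicForm_wordProd_arithProg_of_ne_zero (a : Fin 3) {d : Fin 3} (hd : d ≠ 0) (n : ℕ) :
    CyclicForm cs 2 (cs.wordProd (arithProg a d n)) ∨
      CyclicForm cs 1 (cs.wordProd (arithProg a d n)) := by
  obtain ⟨a', d', j, hd', hj, hjn, ha, hω⟩ := exists_anchored_arithProg_eq a hd n
  rw [hω]
  rcases hd' with rfl | rfl
  · exact .inl (cyclicForm_wordProd_arithProg cs hj hjn ha)
  · exact .inr (cyclicForm_wordProd_arithProg cs hj hjn ha)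

end affineA2

/-- Classification of fully commutative elements of `W(Ã₂)`: with `σ₁ = simple 0`,
`σ₂ = simple 1`, `a₃ = simple 2`, every fully commutative `w` is of the form
`x (σ₂σ₁a₃)^k y` with `x ∈ {1, a₃, σ₁a₃}`, `y ∈ {1, σ₂, σ₂σ₁}`, or of the form
`x' (σ₁σ₂a₃)^k y'` with `x' ∈ {1, a₃, σ₂a₃}`, `y' ∈ {1, σ₁, σ₁σ₂}`. -/
theorem fc_affine_A2_classification {W : Type*} [Group W]
    (cs : CoxeterSystem (affineAMatrix 2) W) (w : W) (hw : IsFC cs w) :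
    (∃ (k : ℕ) (x y : W),
      x ∈ ({1, cs.simple 2, cs.simple 0 * cs.simple 2} : Set W) ∧
      y ∈ ({1, cs.simple 1, cs.simple 1 * cs.simple 0} : Set W) ∧
      w = x * (cs.simple 1 * cs.simple 0 * cs.simple 2) ^ k * y) ∨
    (∃ (k : ℕ) (x y : W),
      x ∈ ({1, cs.simple 2, cs.simple 1 * cs.simple 2} : Set W) ∧
      y ∈ ({1, cs.simple 0, cs.simple 0 * cs.simple 1} : Set W) ∧
      w = x * (cs.simple 0 * cs.simple 1 * cs.simple 2) ^ k * y) := by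
  obtain ⟨ω, hred, rfl⟩ := cs.exists_isReduced w
  obtain ⟨a, d, n, hd, rfl⟩ := exists_eq_arithProg hred.not_isInfix_pair fun s t hst ↦
    hw.not_isInfix_braid affineAMatrix_two_ne_two ⟨rfl, hred⟩ (affineAMatrix_two_of_ne hst)
  exact cyclicForm_wordProd_arithProg_of_ne_zero cs a hd n
end

section
/- In W(Ã_2), for every k ≥ 0, the word (σ_2σ_1a_3)^k σ_2 σ_1 is a reduced expression and the element it represents is fully commutative. -/
open CoxeterSystem

/-!
`W(Ã₂)` acts on `ℤ²` by affine reflections whose walls are the lines `x, y, x + y ∈ 3ℤ`.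
Right multiplication by a generator moves `w • (1, 1)` to an adjacent alcove, so the number of
walls separating `w • (1, 1)` from `(1, 1)` is a lower bound for `ℓ(w)`. The word
`(σ₂σ₁a₃)^k σ₂σ₁` is a prefix of a gallery running straight down the strip `0 < x < 3` and
crossing a new wall at each step, so it is reduced. Moreover, every alcove of that gallery has
a single neighbour closer to `(1, 1)`, namely its predecessor: each prefix has its last letter as
its only right descent, so by induction the word is the unique reduced word of its element,
which is therefore fully commutative.
-/

namespace CoxeterSystem

variable {B W : Type*} [Group W] {M : CoxeterMatrix B} (cs : CoxeterSystem M W)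

theorem le_length_of_map_mul_simple_le (f : W → ℕ) (h_one : f 1 = 0)
    (h_mul : ∀ w i, f (w * cs.simple i) ≤ f w + 1) (w : W) : f w ≤ cs.length w := by
  have h_word (ω : List B) : f (cs.wordProd ω) ≤ ω.length := by
    induction ω using List.reverseRecOn with
    | nil => simp [h_one]
    | append_singleton ω i ih =>
      rw [wordProd_append, wordProd_singleton, List.length_append, List.length_singleton]
      exact (h_mul _ i).trans (by omega)
  obtain ⟨ω, hω, rfl⟩ := cs.exists_isReduced w
  exact hω.eq ▸ h_word ω

def HasUniqueRedex (ω : List B) : Prop :=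
  ∀ ω', IsRedexOf cs ω' (cs.wordProd ω) → ω' = ω

theorem hasUniqueRedex_nil : cs.HasUniqueRedex [] := by
  rintro ω ⟨hπ, hω⟩
  rw [IsReduced, hπ, wordProd_nil, length_one] at hω
  exact List.eq_nil_of_length_eq_zero hω.symm

variable {cs}

theorem HasUniqueRedex.append_singleton {ω : List B} {i : B} (hω : cs.HasUniqueRedex ω)
    (h_red : cs.IsReduced (ω ++ [i]))
    (h_desc : ∀ j, cs.IsRightDescent (cs.wordProd (ω ++ [i])) j → j = i) :
    cs.HasUniqueRedex (ω ++ [i]) := by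
  rintro ω' ⟨hπ, h_red'⟩
  obtain rfl | ⟨ω'', j, rfl⟩ := ω'.eq_nil_or_concat
  · simp [IsReduced, ← hπ] at h_red
  rw [List.concat_eq_append] at hπ h_red' ⊢
  have h_prefix : cs.wordProd ω'' = cs.wordProd (ω ++ [i]) * cs.simple j := by
    rw [← hπ, wordProd_append, wordProd_singleton, simple_mul_simple_cancel_right]
  -- the last letter of a reduced word is a right descent
  obtain rfl : j = i := by
    refine h_desc j ?_
    have := cs.length_wordProd_le ω''
    rw [IsRightDescent, ← h_prefix, ← hπ, h_red', List.length_append, List.length_singleton]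
    omega
  have hπ'' : cs.wordProd ω'' = cs.wordProd ω := by
    rw [h_prefix, wordProd_append, wordProd_singleton, simple_mul_simple_cancel_right]
  rw [hω ω'' ⟨hπ'', by simpa using h_red'.take ω''.length⟩]

theorem HasUniqueRedex.isFC {ω : List B} (hω : cs.HasUniqueRedex ω) :
    IsFC cs (cs.wordProd ω) := by
  intro ω₁ ω₂ h₁ h₂
  rw [hω ω₁ h₁, hω ω₂ h₂]
  exact Relation.ReflTransGen.refl

end CoxeterSystem

namespace AffineA2

/-- Oblique coordinates in which the walls are the lines `x ∈ 3ℤ`, `y ∈ 3ℤ`, `x + y ∈ 3ℤ`: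
`refl 0`, `refl 1`, `refl 2` are the reflections in `x = 0`, `y = 0`, `x + y = 3`, the walls of
the alcove of `base`. -/
def refl : Fin 3 → ℤ × ℤ → ℤ × ℤ
  | 0, (x, y) => (-x, x + y)
  | 1, (x, y) => (x + y, -y)
  | 2, (x, y) => (3 - y, 3 - x)

def base : ℤ × ℤ := (1, 1)

theorem refl_involutive (i : Fin 3) : Function.Involutive (refl i) := by
  rintro ⟨x, y⟩
  fin_cases i <;> simp [refl]

def reflPerm (i : Fin 3) : Equiv.Perm (ℤ × ℤ) := (refl_involutive i).toPerm

theorem isLiftable_reflPerm : (affineAMatrix 2).IsLiftable reflPerm := by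
  intro i j
  ext ⟨x, y⟩ : 1
  fin_cases i <;> fin_cases j <;>
    simp +decide [affineAMatrix, reflPerm, refl, pow_succ, Equiv.Perm.mul_apply] <;> omega

section Representation

variable {W : Type*} [Group W] (cs : CoxeterSystem (affineAMatrix 2) W)

noncomputable def rep : W →* Equiv.Perm (ℤ × ℤ) := cs.lift ⟨reflPerm, isLiftable_reflPerm⟩

theorem rep_mul_simple_apply (w : W) (i : Fin 3) (p : ℤ × ℤ) :
    rep cs (w * cs.simple i) p = rep cs w (refl i p) := by
  rw [map_mul, rep, cs.lift_apply_simple]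
  rfl

theorem rep_simple_apply (i : Fin 3) (p : ℤ × ℤ) : rep cs (cs.simple i) p = refl i p := by
  rw [rep, cs.lift_apply_simple]
  rfl

theorem rep_simple_mul_apply (i : Fin 3) (w : W) (p : ℤ × ℤ) :
    rep cs (cs.simple i * w) p = refl i (rep cs w p) := by
  rw [map_mul, rep, cs.lift_apply_simple]
  rfl

end Representation

def OffWalls (p : ℤ × ℤ) : Prop := ¬ 3 ∣ p.1 ∧ ¬ 3 ∣ p.2 ∧ ¬ 3 ∣ (p.1 + p.2)

/-- The integer points off the walls are the alcove centres, one per alcove; `Adjacent p q` says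
that their alcoves coincide or share an edge. -/
def Adjacent (p q : ℤ × ℤ) : Prop :=
  OffWalls p ∧ OffWalls q ∧ |q.1 - p.1| ≤ 2 ∧ |q.2 - p.2| ≤ 2 ∧ |q.1 + q.2 - (p.1 + p.2)| ≤ 2

/-- For `p` off the walls, the number of walls separating `p` from `base` (`/` on `ℤ` rounds
down). -/
def wallCount (p : ℤ × ℤ) : ℕ :=
  (p.1 / 3).natAbs + (p.2 / 3).natAbs + ((p.1 + p.2) / 3).natAbs

theorem residues_of_offWalls {p : ℤ × ℤ} (h : OffWalls p) :
    p.1 % 3 = 1 ∧ p.2 % 3 = 1 ∨ p.1 % 3 = 2 ∧ p.2 % 3 = 2 := by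
  simp only [OffWalls] at h
  omega

theorem wallCount_le_of_adjacent {p q : ℤ × ℤ} (h : Adjacent p q) :
    wallCount q ≤ wallCount p + 1 := by
  have hp := residues_of_offWalls h.1
  have hq := residues_of_offWalls h.2.1
  obtain ⟨-, -, h⟩ := h
  simp only [wallCount, abs_le] at *
  omega

theorem Adjacent.map_refl {p q : ℤ × ℤ} (h : Adjacent p q) (i : Fin 3) :
    Adjacent (refl i p) (refl i q) := by
  obtain ⟨x, y⟩ := p
  obtain ⟨u, v⟩ := q
  fin_cases i <;> simp only [Adjacent, OffWalls, AffineA2.refl, abs_le] at * <;> omega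

theorem Adjacent.map_rep {W : Type*} [Group W] (cs : CoxeterSystem (affineAMatrix 2) W)
    {p q : ℤ × ℤ} (h : Adjacent p q) (w : W) : Adjacent (rep cs w p) (rep cs w q) := by
  induction w using cs.simple_induction_left with
  | one => simpa using h
  | mul_simple_left w i ih => simpa only [rep_simple_mul_apply] using ih.map_refl i

theorem adjacent_base_refl (i : Fin 3) : Adjacent base (refl i base) := by
  fin_cases i <;> simp [Adjacent, OffWalls, base, AffineA2.refl]

theorem wallCount_rep_base_le_length {W : Type*} [Group W]
    (cs : CoxeterSystem (affineAMatrix 2) W) (w : W) :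
    wallCount (rep cs w base) ≤ cs.length w := by
  refine cs.le_length_of_map_mul_simple_le (fun w => wallCount (rep cs w base))
    (by simp [wallCount, base]) ?_ w
  intro w i
  rw [rep_mul_simple_apply]
  exact wallCount_le_of_adjacent ((adjacent_base_refl i).map_rep cs w)

def letter (j : ℕ) : Fin 3 := ![1, 0, 2] ⟨j % 3, Nat.mod_lt j three_pos⟩

def pathWord : ℕ → List (Fin 3)
  | 0 => []
  | j + 1 => pathWord j ++ [letter j]

theorem pathWord_succ (j : ℕ) : pathWord (j + 1) = pathWord j ++ [letter j] := rfl

theorem pathWord_length (j : ℕ) : (pathWord j).length = j := by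
  induction j with
  | zero => rfl
  | succ j ih => simp [pathWord_succ, ih]

theorem pathWord_add_three (j : ℕ) : pathWord (j + 3) = [1, 0, 2] ++ pathWord j := by
  induction j with
  | zero => simp [pathWord, letter]
  | succ j ih =>
    have h_letter : letter (j + 3) = letter j := by simp [letter]
    rw [show j + 1 + 3 = j + 3 + 1 by omega, pathWord_succ, ih, h_letter, pathWord_succ,
      List.append_assoc]

theorem flatten_replicate_append_eq_pathWord (k : ℕ) :
    (List.replicate k ([1, 0, 2] : List (Fin 3))).flatten ++ [1, 0] = pathWord (3 * k + 2) := by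
  induction k with
  | zero => simp [pathWord, letter]
  | succ k ih =>
    rw [List.replicate_succ, List.flatten_cons, List.append_assoc, ih,
      show 3 * (k + 1) + 2 = 3 * k + 2 + 3 by omega, pathWord_add_three]

/-- The centre of the alcove reached by `pathWord j`; the gallery runs down the strip
`0 < x < 3`. -/
def pathPoint (j : ℕ) : ℤ × ℤ := (1 + (j % 2 : ℕ), 1 - ((3 * j + 1) / 2 : ℕ))

theorem wallCount_pathPoint (j : ℕ) : wallCount (pathPoint j) = j := by
  obtain ⟨m, rfl | rfl⟩ := Nat.even_or_odd' j <;> simp only [wallCount, pathPoint] <;> omega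

theorem add_two_le_wallCount_of_adjacent_pathPoint {j : ℕ} {q : ℤ × ℤ}
    (h : Adjacent (pathPoint (j + 1)) q) (h_ne : q ≠ pathPoint (j + 1))
    (h_ne' : q ≠ pathPoint j) : j + 2 ≤ wallCount q := by
  obtain ⟨-, hq, h⟩ := h
  have hq := residues_of_offWalls hq
  obtain ⟨u, v⟩ := q
  simp only [wallCount, pathPoint, abs_le, ne_eq, Prod.ext_iff] at *
  obtain ⟨m, rfl | rfl⟩ := Nat.even_or_odd' j <;> omega

section Path

variable {W : Type*} [Group W] (cs : CoxeterSystem (affineAMatrix 2) W)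

theorem rep_pathWord_base (j : ℕ) : rep cs (cs.wordProd (pathWord j)) base = pathPoint j := by
  induction j using Nat.strong_induction_on with
  | _ j ih =>
    rcases j with _ | _ | _ | j
    · simp [pathWord, pathPoint, base]
    · simp [pathWord, pathPoint, base, letter, rep_simple_apply, refl]
    · simp [pathWord, pathPoint, base, letter, wordProd_cons, rep_simple_apply, refl]
    · rw [pathWord_add_three]
      simp [wordProd_cons, rep_simple_apply, ih j (by omega), refl, pathPoint]
      obtain ⟨m, rfl | rfl⟩ := Nat.even_or_odd' j <;> push_cast <;> omega

theorem isReduced_pathWord (j : ℕ) : cs.IsReduced (pathWord j) := by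
  have h_upper := cs.length_wordProd_le (pathWord j)
  have h_lower := wallCount_rep_base_le_length cs (cs.wordProd (pathWord j))
  rw [rep_pathWord_base, wallCount_pathPoint] at h_lower
  rw [pathWord_length] at h_upper
  rw [CoxeterSystem.IsReduced, pathWord_length]
  omega

/-- The three alcoves adjacent to that of `pathPoint (j + 1)` are those of `pathPoint j` and
two alcoves further from `base`; the former is reached through `letter j`. -/
theorem eq_letter_of_isRightDescent_pathWord {j : ℕ} {i : Fin 3}
    (h : cs.IsRightDescent (cs.wordProd (pathWord (j + 1))) i) : i = letter j := by
  have h_prev : rep cs (cs.wordProd (pathWord (j + 1))) (refl (letter j) base) = pathPoint j := by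
    rw [← rep_mul_simple_apply, ← rep_pathWord_base cs j, pathWord_succ, wordProd_append,
      wordProd_singleton, simple_mul_simple_cancel_right]
  set w := cs.wordProd (pathWord (j + 1))
  by_contra hi
  have h_base_inj : Function.Injective fun i : Fin 3 => refl i base := by decide
  have h_far : j + 2 ≤ wallCount (rep cs w (refl i base)) := by
    refine add_two_le_wallCount_of_adjacent_pathPoint ?_ ?_ ?_
    · rw [← rep_pathWord_base cs]
      exact (adjacent_base_refl i).map_rep cs w
    · rw [← rep_pathWord_base cs]
      exact (rep cs w).injective.ne (by fin_cases i <;> decide)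
    · rw [← h_prev]
      exact (rep cs w).injective.ne (h_base_inj.ne hi)
  have h_length := wallCount_rep_base_le_length cs (w * cs.simple i)
  rw [rep_mul_simple_apply] at h_length
  have h_red : cs.length w = j + 1 := by
    rw [isReduced_pathWord cs (j + 1), pathWord_length]
  rw [IsRightDescent] at h
  omega

theorem hasUniqueRedex_pathWord (j : ℕ) : cs.HasUniqueRedex (pathWord j) := by
  induction j with
  | zero => exact cs.hasUniqueRedex_nil
  | succ j ih =>
    exact ih.append_singleton (isReduced_pathWord cs (j + 1))
      fun i => eq_letter_of_isRightDescent_pathWord cs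

end Path

end AffineA2

/-- In `W(Ã₂)`, for every `k ≥ 0` the word `(σ₂σ₁a₃)^k σ₂σ₁` (indices `[1,0,2]` repeated,
then `[1,0]`) is reduced and the element it represents is fully commutative. -/
theorem reduced_fc_power_word {W : Type*} [Group W]
    (cs : CoxeterSystem (affineAMatrix 2) W) (k : ℕ) :
    cs.IsReduced ((List.replicate k ([1, 0, 2] : List (Fin 3))).flatten ++ [1, 0]) ∧
    IsFC cs (cs.wordProd ((List.replicate k ([1, 0, 2] : List (Fin 3))).flatten ++ [1, 0])) := by
  rw [AffineA2.flatten_replicate_append_eq_pathWord]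
  exact ⟨AffineA2.isReduced_pathWord cs _, (AffineA2.hasUniqueRedex_pathWord cs _).isFC⟩
end
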